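/- arXiv:1702.05808 — 6 statements merged into one kernel-verified Lean document; each statement's English description precedes it below -/
import Mathlib

section
/- For positive integers q_1, k, and 0 ≤ ℓ ≤ q_1, the identity C(k-1+ℓ, ℓ) · C(k+q_1-2, q_1-ℓ) = ((ℓ+k-1)/(q_1+k-1)) · C(q_1, ℓ) · C(q_1+k-1, k-1) holds. -/
theorem binom_identity (q1 k ℓ : ℕ) (hq : 1 ≤ q1) (hk : 1 ≤ k) (hℓ : ℓ ≤ q1) :
    (q1 + k - 1) * (Nat.choose (k - 1 + ℓ) ℓ * Nat.choose (k + q1 - 2) (q1 - ℓ))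
      = (ℓ + k - 1) * Nat.choose q1 ℓ * Nat.choose (q1 + k - 1) (k - 1) := by
  obtain ⟨a, rfl⟩ : ∃ a, k = a + 1 := ⟨k - 1, by omega⟩
  obtain ⟨b, rfl⟩ : ∃ b, q1 = b + 1 := ⟨q1 - 1, by omega⟩
  have hℓ' : ℓ ≤ b + 1 := hℓ
  rw [show b + 1 + (a + 1) - 1 = a + b + 1 by omega,
      show a + 1 - 1 + ℓ = a + ℓ by omega,
      show a + 1 + (b + 1) - 2 = a + b by omega,
      show ℓ + (a + 1) - 1 = ℓ + a by omega,
      show a + 1 - 1 = a by omega]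
  by_cases hz : a = 0 ∧ ℓ = 0
  · obtain ⟨rfl, rfl⟩ := hz
    simp [Nat.choose_eq_zero_of_lt (show b < b + 1 - 0 by omega)]
  · obtain ⟨d, hd⟩ : ∃ d, a + ℓ = d + 1 := ⟨a + ℓ - 1, by omega⟩
    rw [← Nat.cast_inj (R := ℚ)]
    push_cast
    rw [Nat.cast_choose ℚ (show ℓ ≤ a + ℓ by omega),
        Nat.cast_choose ℚ (show b + 1 - ℓ ≤ a + b by omega),
        Nat.cast_choose ℚ (show ℓ ≤ b + 1 by omega),
        Nat.cast_choose ℚ (show a ≤ a + b + 1 by omega),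
        show a + ℓ - ℓ = a by omega,
        show a + b - (b + 1 - ℓ) = d by omega,
        show a + b + 1 - a = b + 1 by omega,
        show a + ℓ = d + 1 from hd,
        Nat.factorial_succ d, Nat.factorial_succ (a + b)]
    have h1 := Nat.factorial_ne_zero ℓ
    have h2 := Nat.factorial_ne_zero a
    have h3 := Nat.factorial_ne_zero (b + 1 - ℓ)
    have h4 := Nat.factorial_ne_zero d
    have h5 := Nat.factorial_ne_zero (b + 1)
    have h6 := Nat.factorial_ne_zero (a + b)
    have hla : (ℓ : ℚ) + a = d + 1 := by exact_mod_cast congrArg (Nat.cast (R := ℚ)) (show ℓ + a = d + 1 by omega)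
    push_cast
    rw [hla]
    field_simp
end

section
/- The total number of cards where the ordered partition (q_1, q_2, ..., q_k) appears on the left (i.e., the number of embeddings of (q_1,...,q_k) into some ordered partition, including the trivial embedding) equals 1 + ((q_1+2k-2)/(q_1+k-1)) · C(q_1+k-1, k-1) · 2^{q_1-1}. -/
/-!
Write `q = (a, t)` with `t = (q₂, …, q_k)` of length `s = k - 1`. A nontrivial embedding of `q`
into `r` places the parts of `t`, in order, into parts `r_{f j} ≥ t_j`. Removing `t_j - 1` from
each chosen part turns `(r, f)` into a composition of `a + s` with the same number `m` of parts,
together with an arbitrary choice of `s` of these parts. So there are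
`∑ₘ C(m, s) C(a + s - 1, m - 1)` nontrivial embeddings (stars and bars). Since
`(a + s) C(a + s - 1, m - 1) = m C(a + s, m)`, this count times `a + s` is
`∑ₘ m C(a + s, m) C(m, s) = C(a + s, s) ∑ᵢ (s + i) C(a, i) = (a + 2s) C(a + s, s) 2^(a-1)`.
-/

/-- The number of embeddings (trivial or nontrivial) of the ordered partition `q`
into the ordered partition `r`. -/
def embCount {b : ℕ} (q r : Composition b) : ℕ :=
  (if q.blocks = r.blocks then 1 else 0) +
    Fintype.card {f : Fin q.blocks.tail.length → Fin r.blocks.length //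
      (∀ i j, i < j → f i < f j) ∧ ∀ j, q.blocks.tail.get j ≤ r.blocks.get (f j)}

open Finset

namespace Finset.Nat

theorem card_antidiagonalTuple (k n : ℕ) : #(antidiagonalTuple k n) = (k + n - 1).choose n := by
  rw [← piAntidiag_univ_fin_eq_antidiagonalTuple, ← card_attach, ← card_map, ← finsuppAntidiag,
    card_finsuppAntidiag_nat_eq_choose, card_univ, Fintype.card_fin]

theorem card_filter_add_le_antidiagonalTuple (m n : ℕ) (a e : Fin m → ℕ) :
    #{v ∈ antidiagonalTuple m (n + ∑ i, e i) | ∀ i, a i + e i ≤ v i}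
      = #{u ∈ antidiagonalTuple m n | ∀ i, a i ≤ u i} := by
  refine card_nbij' (· - e) (· + e) ?_ ?_ ?_ ?_
  · intro v hv
    simp only [mem_coe, mem_filter, mem_antidiagonalTuple] at hv ⊢
    refine ⟨?_, fun i => le_tsub_of_add_le_right (hv.2 i)⟩
    rw [Pi.sub_def, sum_tsub_distrib _ fun i _ => le_of_add_le_right (hv.2 i), hv.1,
      Nat.add_sub_cancel]
  · intro u hu
    simp only [mem_coe, mem_filter, mem_antidiagonalTuple] at hu ⊢
    exact ⟨by rw [Pi.add_def, sum_add_distrib, hu.1], fun i => Nat.add_le_add_right (hu.2 i) _⟩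
  · intro v hv
    funext i
    exact Nat.sub_add_cancel (le_of_add_le_right ((mem_filter.1 hv).2 i))
  · intro u _
    funext i
    simp

def posAntidiagonalTuple (m n : ℕ) : Finset (Fin m → ℕ) :=
  {v ∈ antidiagonalTuple m n | ∀ i, 0 < v i}

theorem posAntidiagonalTuple_eq_empty {m n : ℕ} (h : n < m) : posAntidiagonalTuple m n = ∅ := by
  refine filter_eq_empty_iff.2 fun v hv hpos => h.not_ge ?_
  calc m = ∑ _i : Fin m, 1 := by simp
    _ ≤ ∑ i, v i := sum_le_sum fun i _ => hpos i
    _ = n := mem_antidiagonalTuple.1 hv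

theorem card_posAntidiagonalTuple_add (m k : ℕ) :
    #(posAntidiagonalTuple m (k + m)) = (m + k - 1).choose k := by
  have := card_filter_add_le_antidiagonalTuple m k 0 1
  simp only [Pi.one_apply, sum_const, card_univ, Fintype.card_fin, smul_eq_mul, mul_one,
    Pi.zero_apply, zero_add, zero_le, implies_true, filter_true] at this
  rw [posAntidiagonalTuple, ← card_antidiagonalTuple, ← this]
  rfl

theorem mul_card_posAntidiagonalTuple (m n : ℕ) :
    n * #(posAntidiagonalTuple m n) = m * n.choose m := by
  rcases lt_or_ge n m with h | h
  · rw [posAntidiagonalTuple_eq_empty h, Nat.choose_eq_zero_of_lt h, card_empty, mul_zero,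
      mul_zero]
  obtain ⟨k, rfl⟩ := Nat.exists_eq_add_of_le' h
  rw [card_posAntidiagonalTuple_add]
  rcases m with _ | m
  · rcases k with _ | k <;> simp
  · rw [show m + 1 + k - 1 = m + k by omega, show k + (m + 1) = m + k + 1 by omega,
      ← Nat.choose_symm_add, Nat.add_one_mul_choose_eq, mul_comm]

open Function in
theorem card_filter_lt_comp_posAntidiagonalTuple {s m : ℕ} {f : Fin s → Fin m} (hf : Injective f)
    (n : ℕ) (w : Fin s → ℕ) :
    #{v ∈ posAntidiagonalTuple m (n + ∑ j, w j) | ∀ j, w j < v (f j)}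
      = #(posAntidiagonalTuple m n) := by
  -- `e` carries the excess `w j` on part `f j`, so the constraints on `v` read `1 + e ≤ v`.
  set e : Fin m → ℕ := extend f w 0
  have he_apply (j : Fin s) : e (f j) = w j := hf.extend_apply w 0 j
  have he_of_notMem {i : Fin m} (hi : ¬∃ j, f j = i) : e i = 0 := extend_apply' _ _ _ hi
  have hsum : ∑ i, e i = ∑ j, w j :=
    (Fintype.sum_of_injective f hf w e (fun _ hi => he_of_notMem hi)
      fun j => (he_apply j).symm).symm
  have hbound (v : Fin m → ℕ) :
      ((∀ i, 0 < v i) ∧ ∀ j, w j < v (f j)) ↔ ∀ i, 1 + e i ≤ v i := by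
    refine ⟨fun ⟨hpos, hw⟩ i => ?_, fun h => ⟨fun i => by have := h i; omega, fun j => ?_⟩⟩
    · by_cases hi : ∃ j, f j = i
      · obtain ⟨j, rfl⟩ := hi
        rw [he_apply, add_comm]
        exact hw j
      · rw [he_of_notMem hi]
        exact hpos i
    · have := h (f j)
      rw [he_apply] at this
      omega
  rw [posAntidiagonalTuple, filter_filter, filter_congr fun v _ => hbound v, ← hsum,
    card_filter_add_le_antidiagonalTuple]
  rfl

end Finset.Nat

open Finset.Nat

theorem Composition.sum_univ_eq_sum_posAntidiagonalTuple {M : Type*} [AddCommMonoid M] (n : ℕ)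
    (g : (Σ m, Fin m → ℕ) → M) :
    ∑ c : Composition n, g (List.equivSigmaTuple c.blocks)
      = ∑ m ∈ range (n + 1), ∑ v ∈ posAntidiagonalTuple m n, g ⟨m, v⟩ := by
  rw [← sum_sigma]
  refine sum_bij (fun c _ => List.equivSigmaTuple c.blocks) ?_ ?_ ?_ fun _ _ => rfl
  · intro c _
    simp only [mem_sigma, mem_range, posAntidiagonalTuple, mem_filter, mem_antidiagonalTuple]
    exact ⟨Nat.lt_succ_of_le c.length_le, c.sum_blocksFun, c.one_le_blocksFun⟩
  · intro c _ c' _ h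
    exact Composition.ext (List.equivSigmaTuple.injective h)
  · rintro ⟨m, v⟩ hv
    simp only [mem_sigma, posAntidiagonalTuple, mem_filter, mem_antidiagonalTuple] at hv
    refine ⟨⟨List.ofFn v, fun hi => ?_, by rw [List.sum_ofFn, hv.2.1]⟩, mem_univ _,
      List.equivSigmaTuple.apply_symm_apply ⟨m, v⟩⟩
    obtain ⟨i, rfl⟩ := List.mem_ofFn.1 hi
    exact hv.2.2 i

open Classical in
theorem Fin.card_filter_strictMono (s m : ℕ) :
    #{f : Fin s → Fin m | StrictMono f} = m.choose s := by
  calc #{f : Fin s → Fin m | StrictMono f} = #(powersetCard s (univ : Finset (Fin m))) := by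
        refine card_bij' (fun f _ => univ.image f)
          (fun S hS => S.orderEmbOfFin (mem_powersetCard.1 hS).2) ?_ ?_ ?_ ?_
        · intro f hf
          rw [mem_filter] at hf
          rw [mem_powersetCard, card_image_of_injective _ hf.2.injective, card_fin]
          exact ⟨subset_univ _, rfl⟩
        · intro S _
          simp only [mem_filter, mem_univ, true_and]
          exact (S.orderEmbOfFin _).strictMono
        · intro f hf
          exact (orderEmbOfFin_unique _ (fun x => mem_image_of_mem f (mem_univ x))
            (mem_filter.1 hf).2).symm
        · intro S _
          exact image_orderEmbOfFin_univ S _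
    _ = m.choose s := by rw [card_powersetCard, card_fin]

theorem Nat.sum_choose_mul_mul_choose {a s B : ℕ} (ha : 0 < a) (hB : a + s ≤ B) :
    ∑ m ∈ range (B + 1), m.choose s * (m * (a + s).choose m)
      = (a + 2 * s) * (a + s).choose s * 2 ^ (a - 1) := by
  have hvanish : ∀ m ∈ range (B + 1), m ∉ range (s + (a + 1)) →
      m.choose s * (m * (a + s).choose m) = 0 := fun m _ hm => by
    rw [Nat.choose_eq_zero_of_lt (by rw [mem_range] at hm; omega : a + s < m), mul_zero, mul_zero]
  have hshift (i : ℕ) : (s + i).choose s * ((s + i) * (a + s).choose (s + i))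
      = (a + s).choose s * (s * a.choose i + i * a.choose i) := by
    have := Nat.choose_mul (n := a + s) (Nat.le_add_right s i)
    rw [Nat.add_sub_cancel, Nat.add_sub_cancel_left] at this
    calc _ = (s + i) * ((a + s).choose (s + i) * (s + i).choose s) := by ring
      _ = _ := by rw [this]; ring
  rw [← sum_subset (range_subset_range.2 (by omega)) hvanish, sum_range_add,
    sum_eq_zero fun m hm => by rw [Nat.choose_eq_zero_of_lt (mem_range.1 hm), zero_mul],
    zero_add, sum_congr rfl fun i _ => hshift i, ← mul_sum, sum_add_distrib, ← mul_sum,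
    Nat.sum_range_choose, Nat.sum_range_mul_choose, ← mul_pow_sub_one ha.ne']
  ring

/-- For `x = ⟨m, v⟩` the ordered partition `(v 0, …, v (m - 1))`, the number of nontrivial
embeddings of `a :: t` into it. -/
def embeddingCount (t : List ℕ) (x : Σ m, Fin m → ℕ) : ℕ :=
  Fintype.card {f : Fin t.length → Fin x.1 //
    (∀ i j, i < j → f i < f j) ∧ ∀ j, t.get j ≤ x.2 (f j)}

theorem sum_embeddingCount {t : List ℕ} (ht : ∀ x ∈ t, 0 < x) {a b : ℕ} (hb : a + t.sum = b) :
    ∑ r : Composition b, embeddingCount t (List.equivSigmaTuple r.blocks)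
      = ∑ m ∈ range (b + 1), m.choose t.length * #(posAntidiagonalTuple m (a + t.length)) := by
  classical
  have hexcess : b = a + t.length + ∑ j, (t.get j - 1) := by
    have : t.sum = ∑ j, ((t.get j - 1) + 1) := by
      rw [← Fin.sum_univ_getElem]
      exact sum_congr rfl fun j _ => (Nat.sub_add_cancel (ht _ (List.get_mem t j))).symm
    rw [← hb, this, sum_add_distrib, sum_const, card_univ, Fintype.card_fin, smul_eq_mul, mul_one]
    ring
  rw [Composition.sum_univ_eq_sum_posAntidiagonalTuple]
  refine sum_congr rfl fun m _ => ?_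
  have hfiber (f : Fin t.length → Fin m) (hf : StrictMono f) :
      #{v ∈ posAntidiagonalTuple m b | ∀ j, t.get j ≤ v (f j)}
        = #(posAntidiagonalTuple m (a + t.length)) := by
    rw [← card_filter_lt_comp_posAntidiagonalTuple hf.injective _ fun j => t.get j - 1,
      ← hexcess]
    refine congrArg card (filter_congr fun v _ => forall_congr' fun j => ?_)
    have := ht _ (List.get_mem t j)
    omega
  calc ∑ v ∈ posAntidiagonalTuple m b, embeddingCount t ⟨m, v⟩
      = ∑ v ∈ posAntidiagonalTuple m b,
          #(bipartiteAbove (fun v f => ∀ j, t.get j ≤ v (f j)) {f | StrictMono f} v) := by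
        refine sum_congr rfl fun v _ => ?_
        rw [embeddingCount, Fintype.card_subtype, bipartiteAbove, filter_filter]
        rfl
    _ = ∑ f ∈ {f : Fin t.length → Fin m | StrictMono f},
          #{v ∈ posAntidiagonalTuple m b | ∀ j, t.get j ≤ v (f j)} :=
        sum_card_bipartiteAbove_eq_sum_card_bipartiteBelow _
    _ = m.choose t.length * #(posAntidiagonalTuple m (a + t.length)) := by
        rw [sum_congr rfl fun f hf => hfiber f (mem_filter.1 hf).2, sum_const,
          Fin.card_filter_strictMono, smul_eq_mul]

theorem mul_sum_embeddingCount {t : List ℕ} (ht : ∀ x ∈ t, 0 < x) {a b : ℕ} (ha : 0 < a)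
    (hb : a + t.sum = b) :
    (a + t.length) * ∑ r : Composition b, embeddingCount t (List.equivSigmaTuple r.blocks)
      = (a + 2 * t.length) * (a + t.length).choose t.length * 2 ^ (a - 1) := by
  have hlen := t.length_le_sum_of_one_le ht
  rw [sum_embeddingCount ht hb, mul_sum]
  simp_rw [mul_left_comm (a + t.length), mul_card_posAntidiagonalTuple]
  exact Nat.sum_choose_mul_mul_choose ha (by omega)

theorem sum_embCount {b : ℕ} (q : Composition b) :
    ∑ r : Composition b, embCount q r
      = 1 + ∑ r : Composition b, embeddingCount q.blocks.tail (List.equivSigmaTuple r.blocks) := by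
  simp only [embCount, sum_add_distrib, ← Composition.ext_iff, sum_ite_eq, mem_univ, if_true]
  rfl

theorem left_card_count_general (b : ℕ) (q : Composition b) :
    (q.blocks.headI + q.length - 1) * (∑ r : Composition b, embCount q r)
      = (q.blocks.headI + q.length - 1) +
        (q.blocks.headI + 2 * q.length - 2) *
          Nat.choose (q.blocks.headI + q.length - 1) (q.length - 1) *
          2 ^ (q.blocks.headI - 1) := by
  rw [sum_embCount, ← q.blocks_length]
  rcases hq : q.blocks with _ | ⟨a, t⟩
  · simp
  have ha : 0 < a := q.blocks_pos (hq ▸ List.mem_cons_self)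
  have ht : ∀ x ∈ t, 0 < x := fun x hx => q.blocks_pos (hq ▸ List.mem_cons_of_mem a hx)
  have hb : a + t.sum = b := by rw [← q.blocks_sum, hq, List.sum_cons]
  simp only [List.headI_cons, List.tail_cons, List.length_cons]
  rw [show a + (t.length + 1) - 1 = a + t.length by omega,
    show a + 2 * (t.length + 1) - 2 = a + 2 * t.length by omega, Nat.add_sub_cancel, mul_add,
    mul_one, mul_sum_embeddingCount ht ha hb]

/-- The number of cards with the ordered partition `q = (q_1,…,q_k)` on the left,
i.e. the number of embeddings of `q` into some ordered partition of `b`, equals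
`1 + ((q_1+2k-2)/(q_1+k-1)) C(q_1+k-1, k-1) 2^(q_1-1)`; stated here after
multiplying both sides by `q_1 + k - 1` to avoid division. -/
theorem left_card_count (b : ℕ) (hb : 1 ≤ b) (q : Composition b) :
    (q.blocks.headI + q.length - 1) * (∑ r : Composition b, embCount q r)
      = (q.blocks.headI + q.length - 1) +
        (q.blocks.headI + 2 * q.length - 2) *
          Nat.choose (q.blocks.headI + q.length - 1) (q.length - 1) *
          2 ^ (q.blocks.headI - 1) :=
  left_card_count_general b q
end

section
/- Define a_b = ∑_{(r_1,...,r_ℓ) ordered partition of b} ∏_i (r_i + 1), with a_0 = 1. Then for all b ≥ 3, a_b = 4·a_{b-1} - 2·a_{b-2}. -/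
/-- `cardCount b = ∑ over ordered partitions (r_1,…,r_ℓ) of b of ∏ (r_i + 1)`,
the number of multiplex juggling cards with `b` balls (with `cardCount 0 = 1`). -/
def cardCount (b : ℕ) : ℕ := ∑ c : Composition b, (c.blocks.map (· + 1)).prod

/-!
Splitting off the first block `k + 1` of a composition of `n + 1` gives the convolution
`a (n + 1) = ∑_{k ≤ n} (k + 2) a (n - k)`. Subtracting this identity from its own shift
turns the weights `k + 2` into `1`, so that `a (n + 2) = 3 a (n + 1) + ∑_{k ≤ n} a k`;
one more difference removes the remaining sum and leaves `a (n + 3) = 4 a (n + 2) - 2 a (n + 1)`.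
-/

namespace Composition

def cons (n : ℕ) (p : Σ k : Fin (n + 1), Composition (n - k)) : Composition (n + 1) where
  blocks := ((p.1 : ℕ) + 1) :: p.2.blocks
  blocks_pos {i} hi := by
    rcases List.mem_cons.1 hi with rfl | hi
    · exact Nat.succ_pos _
    · exact p.2.blocks_pos hi
  blocks_sum := by
    have := p.1.isLt
    rw [List.sum_cons, p.2.blocks_sum]
    omega

theorem cons_bijective (n : ℕ) : Function.Bijective (cons n) := by
  constructor
  · rintro ⟨k, c⟩ ⟨k', c'⟩ h
    have hblocks : ((k : ℕ) + 1) :: c.blocks = ((k' : ℕ) + 1) :: c'.blocks :=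
      congrArg Composition.blocks h
    obtain rfl : k = k' := Fin.ext (by simpa using List.head_eq_of_cons_eq hblocks)
    obtain rfl : c = c' := Composition.ext (List.tail_eq_of_cons_eq hblocks)
    rfl
  · rintro ⟨_ | ⟨a, l⟩, hpos, hsum⟩
    · simp at hsum
    · have ha : 0 < a := hpos List.mem_cons_self
      rw [List.sum_cons] at hsum
      refine ⟨⟨⟨a - 1, by omega⟩, ⟨l, fun hi => hpos (List.mem_cons_of_mem _ hi), ?_⟩⟩, ?_⟩
      · simp only
        omega
      · simp only [cons, Composition.ext_iff, List.cons.injEq, and_true]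
        omega

theorem sum_prod_map_blocks_succ {R : Type*} [Semiring R] (w : ℕ → R) (n : ℕ) :
    ∑ c : Composition (n + 1), (c.blocks.map w).prod =
      ∑ k ∈ Finset.range (n + 1),
        w (k + 1) * ∑ c : Composition (n - k), (c.blocks.map w).prod := by
  rw [← Fintype.sum_bijective (cons n) (cons_bijective n)
      (fun p => w (p.1 + 1) * (p.2.blocks.map w).prod) (fun c => (c.blocks.map w).prod)
      (fun _ => List.prod_cons.symm),
    ← Finset.univ_sigma_univ, Finset.sum_sigma,
    ← Fin.sum_univ_eq_sum_range (fun k => w (k + 1) * ∑ c : Composition (n - k), _)]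
  simp only [Finset.mul_sum]

end Composition

theorem cardCount_succ (n : ℕ) :
    cardCount (n + 1) = ∑ k ∈ Finset.range (n + 1), (k + 2) * cardCount (n - k) :=
  Composition.sum_prod_map_blocks_succ (· + 1) n

theorem cardCount_add_two (n : ℕ) :
    cardCount (n + 2) = 3 * cardCount (n + 1) + ∑ k ∈ Finset.range (n + 1), cardCount k := by
  have reflect : ∑ k ∈ Finset.range (n + 1), cardCount (n - k) =
      ∑ k ∈ Finset.range (n + 1), cardCount k :=
    Finset.sum_range_reflect cardCount (n + 1)
  calc cardCount (n + 2)
      = 2 * cardCount (n + 1) + ∑ k ∈ Finset.range (n + 1), (k + 3) * cardCount (n - k) := by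
        rw [cardCount_succ, Finset.sum_range_succ', add_comm]
        simp only [Nat.sub_zero, Nat.add_sub_add_right]
    _ = 2 * cardCount (n + 1) + ∑ k ∈ Finset.range (n + 1),
          ((k + 2) * cardCount (n - k) + cardCount (n - k)) := by
        congr 1
        exact Finset.sum_congr rfl fun k _ => by ring
    _ = 3 * cardCount (n + 1) + ∑ k ∈ Finset.range (n + 1), cardCount k := by
        rw [Finset.sum_add_distrib, ← cardCount_succ, reflect]
        ring

theorem cardCount_linear_recurrence (b : ℕ) (hb : 3 ≤ b) :
    (cardCount b : ℤ) = 4 * cardCount (b - 1) - 2 * cardCount (b - 2) := by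
  obtain ⟨n, rfl⟩ : ∃ n, b = n + 3 := ⟨b - 3, by omega⟩
  have shifted : cardCount (n + 3) =
      3 * cardCount (n + 2) + ∑ k ∈ Finset.range (n + 2), cardCount k :=
    cardCount_add_two (n + 1)
  have base := cardCount_add_two n
  rw [Finset.sum_range_succ] at shifted
  show (cardCount (n + 3) : ℤ) = 4 * cardCount (n + 2) - 2 * cardCount (n + 1)
  omega
end

section
/- Fix b ≥ 1 and define the matrix A_b indexed by ordered partitions of b, where the (q,r) entry equals the number of embeddings (trivial or nontrivial) of q into r. Then the trace of A_b equals p(b) + ∑_{i=0}^{b-1} 2^{b-i-1}·p(i), where p(i) is the number of unordered partitions of i (with p(0)=1). -/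
/-- The transfer matrix `A_b`, indexed by ordered partitions of `b`, whose
`(q, r)` entry is the number of embeddings of `q` into `r`. -/
def A (b : ℕ) : Matrix (Composition b) (Composition b) ℕ := fun q r => embCount q r

/-!
A nontrivial embedding of `q = (q₁, …, q_k)` into itself is a strictly increasing map from the
`k - 1` positions `2, …, k` into the `k` positions of `q`, so it omits exactly one position `p`,
and it is admissible iff `q₁ ≥ q₂ ≥ ⋯ ≥ q_p`. Hence the diagonal entry at `q` is one more than
the number of weakly decreasing nonempty prefixes of `q`. A decreasing prefix with sum `i` is a
partition of `i` listed in decreasing order, and what follows it is an arbitrary composition of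
`b - i`; so these prefixes contribute `∑_{i=1}^{b} p(i) 2^(b-i-1)` to the trace, while the
trivial embeddings contribute the `2^(b-1)` compositions of `b`, which is the `i = 0` term.
The `i = b` term is `p(b)` because `2 ^ (b - b - 1) = 1` in `ℕ`, the number of compositions
of `0`.
-/

open Finset

theorem Fin.exists_succAbove_eq_of_strictMono {n : ℕ} {f : Fin n → Fin (n + 1)}
    (hf : StrictMono f) : ∃ p : Fin (n + 1), p.succAbove = f := by
  classical
  obtain ⟨p, hp⟩ : ∃ p, (univ.image f)ᶜ = {p} := card_eq_one.1 <| by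
    rw [card_compl, card_image_of_injective _ hf.injective]; simp
  refine ⟨p, ((Fin.strictMono_succAbove p).range_inj hf).1 ?_⟩
  rw [Fin.range_succAbove, ← coe_singleton, ← hp]
  simp

namespace List

variable {α : Type*}

theorem pairwise_ge_take_succ_iff [Preorder α] (l : List α) (p : ℕ) (hp : p < l.length) :
    (l.take (p + 1)).Pairwise (· ≥ ·) ↔ ∀ j (hj : j < p), l[j + 1] ≤ l[j] := by
  rw [← isChain_iff_pairwise, isChain_iff_getElem]
  simp only [length_take, getElem_take]
  exact ⟨fun h j hj => h j (by omega), fun h j hj => h j (by omega)⟩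

theorem forall_le_get_succAbove_iff [Preorder α] (a : α) (M : List α) (p : Fin (M.length + 1)) :
    (∀ j : Fin M.length, M.get j ≤ (a :: M).get (p.succAbove j)) ↔
      ((a :: M).take (p + 1)).Pairwise (· ≥ ·) := by
  rw [pairwise_ge_take_succ_iff _ _ (by simpa using p.is_le)]
  constructor
  · intro h j hj
    simpa [Fin.succAbove_of_castSucc_lt p ⟨j, by omega⟩ hj] using h ⟨j, by omega⟩
  · intro h j
    rcases Fin.castSucc_lt_or_lt_succ p j with hj | hj
    · simpa [Fin.succAbove_of_castSucc_lt _ _ hj] using h j hj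
    · simp [Fin.succAbove_of_lt_succ _ _ hj]

theorem card_strictMono_forall_le_get_cons [LinearOrder α] (a : α) (M : List α) :
    Fintype.card {f : Fin M.length → Fin (M.length + 1) //
      (∀ i j, i < j → f i < f j) ∧ ∀ j, M.get j ≤ (a :: M).get (f j)} =
    #{m ∈ Finset.range (M.length + 1) | ((a :: M).take (m + 1)).Pairwise (· ≥ ·)} := by
  rw [Fintype.card_subtype]
  symm
  refine Finset.card_bij
    (fun m hm => Fin.succAbove ⟨m, Finset.mem_range.1 (Finset.mem_filter.1 hm).1⟩) ?_ ?_ ?_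
  · intro m hm
    simp only [Finset.mem_filter, Finset.mem_range] at hm
    simpa [(Fin.strictMono_succAbove _).lt_iff_lt] using
      (forall_le_get_succAbove_iff a M ⟨m, hm.1⟩).2 hm.2
  · intro m₁ _ m₂ _ h
    simpa using Fin.succAbove_left_injective h
  · simp only [Finset.mem_filter, Finset.mem_univ, true_and, Finset.mem_range]
    rintro f ⟨hf, hle⟩
    obtain ⟨p, rfl⟩ := Fin.exists_succAbove_eq_of_strictMono (f := f) fun i j => hf i j
    exact ⟨p, ⟨p.isLt, (forall_le_get_succAbove_iff a M p).1 hle⟩, rfl⟩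

end List

namespace Nat.Partition

variable {n : ℕ}

def sortedComposition (P : n.Partition) : Composition n where
  blocks := P.parts.sort (· ≥ ·)
  blocks_pos hi := P.parts_pos (by simpa using hi)
  blocks_sum := by rw [← Multiset.sum_coe, Multiset.sort_eq, P.parts_sum]

theorem sortedComposition_blocks_pairwise (P : n.Partition) :
    P.sortedComposition.blocks.Pairwise (· ≥ ·) :=
  Multiset.pairwise_sort _ _

theorem sortedComposition_length (P : n.Partition) :
    P.sortedComposition.length = P.parts.card :=
  Multiset.length_sort _

theorem sortedComposition_injective : Function.Injective (sortedComposition (n := n)) :=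
  fun P Q h => by
    ext1
    rw [← Multiset.sort_eq P.parts (· ≥ ·), ← Multiset.sort_eq Q.parts (· ≥ ·)]
    exact congrArg (fun c : Composition n => (c.blocks : Multiset ℕ)) h

theorem sortedComposition_blocks_of_pairwise {P : n.Partition} {l : List ℕ} (hP : P.parts = l)
    (hl : l.Pairwise (· ≥ ·)) : P.sortedComposition.blocks = l := by
  change P.parts.sort _ = l
  rw [hP, Multiset.coe_sort, List.mergeSort_eq_self _ hl]

theorem card_parts_pos (hn : 0 < n) (P : n.Partition) : 0 < P.parts.card :=
  Multiset.card_pos.2 fun h => by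
    have := P.parts_sum
    simp only [h, Multiset.sum_zero] at this
    omega

end Nat.Partition

namespace Composition

variable {n : ℕ}

def antitonePrefixes (c : Composition n) : Finset ℕ :=
  {m ∈ Finset.range c.length | (c.blocks.take (m + 1)).Pairwise (· ≥ ·)}

def prependSorted {i : ℕ} (hin : i ≤ n) (P : i.Partition) (C : Composition (n - i)) :
    Composition n :=
  (P.sortedComposition.append C).cast (Nat.add_sub_of_le hin)

section prependSorted

variable {i : ℕ} (hin : i ≤ n) (P : i.Partition) (C : Composition (n - i))

theorem prependSorted_blocks :
    (prependSorted hin P C).blocks = P.sortedComposition.blocks ++ C.blocks :=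
  rfl

theorem prependSorted_length :
    (prependSorted hin P C).length = P.parts.card + C.length := by
  rw [← P.sortedComposition_length]
  exact List.length_append

theorem take_prependSorted_blocks :
    (prependSorted hin P C).blocks.take P.parts.card = P.sortedComposition.blocks := by
  rw [prependSorted_blocks, List.take_left' (by rw [blocks_length, P.sortedComposition_length])]

theorem drop_prependSorted_blocks :
    (prependSorted hin P C).blocks.drop P.parts.card = C.blocks := by
  rw [prependSorted_blocks, List.drop_left' (by rw [blocks_length, P.sortedComposition_length])]

end prependSorted

theorem prependSorted_inj {i : ℕ} (hin : i ≤ n) {P P' : i.Partition}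
    {C C' : Composition (n - i)} (hk : P.parts.card = P'.parts.card)
    (h : prependSorted hin P C = prependSorted hin P' C') : P = P' ∧ C = C' := by
  obtain rfl : P = P' := Nat.Partition.sortedComposition_injective <| Composition.ext <| by
    rw [← take_prependSorted_blocks hin P C, ← take_prependSorted_blocks hin P' C', h, hk]
  exact ⟨rfl, Composition.ext <| by
    rw [← drop_prependSorted_blocks hin P C, ← drop_prependSorted_blocks hin P C', h]⟩

theorem exists_prependSorted_eq {i m : ℕ} (hin : i ≤ n) {c : Composition n}
    (hm : m ∈ c.antitonePrefixes) (hsum : c.sizeUpTo (m + 1) = i) :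
    ∃ (P : i.Partition) (C : Composition (n - i)),
      P.parts.card = m + 1 ∧ prependSorted hin P C = c := by
  simp only [antitonePrefixes, mem_filter, mem_range] at hm
  have hsplit := List.sum_take_add_sum_drop c.blocks (m + 1)
  rw [c.blocks_sum, ← sizeUpTo, hsum] at hsplit
  let P : i.Partition := ⟨c.blocks.take (m + 1),
    fun hj => c.blocks_pos (List.mem_of_mem_take hj), by rw [Multiset.sum_coe, ← hsum]; rfl⟩
  let C : Composition (n - i) := ⟨c.blocks.drop (m + 1),
    fun hj => c.blocks_pos (List.mem_of_mem_drop hj), by omega⟩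
  refine ⟨P, C, ?_, Composition.ext ?_⟩
  · simp only [P, Multiset.coe_card, List.length_take]
    exact min_eq_left hm.1
  · rw [prependSorted_blocks, P.sortedComposition_blocks_of_pairwise rfl hm.2]
    exact List.take_append_drop _ _

theorem card_antitonePrefixes_fiber {i : ℕ} (hi : 0 < i) (hin : i ≤ n) :
    #{x ∈ (univ : Finset (Composition n)).sigma antitonePrefixes | x.1.sizeUpTo (x.2 + 1) = i} =
      Fintype.card i.Partition * Fintype.card (Composition (n - i)) := by
  rw [← Fintype.card_prod, ← card_univ]
  symm
  refine card_nbij (fun x => ⟨prependSorted hin x.1 x.2, x.1.parts.card - 1⟩) ?_ ?_ ?_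
  · rintro ⟨P, C⟩ -
    have := P.card_parts_pos hi
    have hm : P.parts.card - 1 + 1 = P.parts.card := by omega
    rw [mem_coe, mem_filter, mem_sigma]
    simp only [mem_univ, true_and, antitonePrefixes, mem_filter, mem_range]
    rw [sizeUpTo, hm, take_prependSorted_blocks, prependSorted_length]
    exact ⟨⟨by omega, P.sortedComposition_blocks_pairwise⟩, P.sortedComposition.blocks_sum⟩
  · rintro ⟨P, C⟩ - ⟨P', C'⟩ - h
    simp only [Sigma.mk.injEq, heq_eq_eq] at h
    have := P.card_parts_pos hi
    have := P'.card_parts_pos hi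
    obtain ⟨rfl, rfl⟩ := prependSorted_inj hin (by omega) h.1
    rfl
  · rintro ⟨c, m⟩ hx
    rw [mem_coe, mem_filter, mem_sigma] at hx
    obtain ⟨P, C, hcard, rfl⟩ := exists_prependSorted_eq hin hx.1.2 hx.2
    exact ⟨(P, C), mem_coe.2 (mem_univ _), by simp [hcard]⟩

theorem sum_card_antitonePrefixes (n : ℕ) :
    ∑ c : Composition n, #c.antitonePrefixes =
      ∑ i ∈ Icc 1 n, Fintype.card i.Partition * Fintype.card (Composition (n - i)) := by
  rw [← card_sigma, card_eq_sum_card_fiberwise (f := fun x => x.1.sizeUpTo (x.2 + 1))]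
  · refine sum_congr rfl fun i hi => ?_
    rw [mem_Icc] at hi
    exact card_antitonePrefixes_fiber hi.1 hi.2
  · rintro ⟨c, m⟩ hx
    rw [mem_coe, mem_sigma, antitonePrefixes, mem_filter, mem_range] at hx
    dsimp only at hx ⊢
    have := c.sizeUpTo_strict_mono hx.2.1
    exact mem_Icc.2 ⟨by omega, c.sizeUpTo_le _⟩

end Composition

theorem embCount_self {n : ℕ} (hn : 0 < n) (c : Composition n) :
    embCount c c = 1 + #c.antitonePrefixes := by
  obtain ⟨a, M, hc⟩ := List.exists_cons_of_ne_nil (c.blocks_eq_nil.not.2 hn.ne')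
  rw [embCount, if_pos rfl, Composition.antitonePrefixes, Composition.length, hc]
  exact congrArg _ (List.card_strictMono_forall_le_get_cons a M)

theorem Finset.add_sum_Icc_one_eq_sum_range_add {M : Type*} [AddCommMonoid M] (f : ℕ → M)
    (n : ℕ) : f 0 + ∑ i ∈ Icc 1 n, f i = ∑ i ∈ range n, f i + f n := by
  rw [← sum_range_succ, range_eq_Ico, sum_eq_sum_Ico_succ_bot n.add_one_pos, zero_add,
    Ico_add_one_right_eq_Icc]

theorem trace_A (b : ℕ) (hb : 1 ≤ b) :
    Matrix.trace (A b) =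
      Fintype.card (Nat.Partition b) +
        ∑ i ∈ Finset.range b, 2 ^ (b - i - 1) * Fintype.card (Nat.Partition i) := by
  have htrace : (A b).trace = ∑ c, embCount c c := rfl
  rw [htrace, sum_congr rfl fun c _ => embCount_self hb c, sum_add_distrib, sum_const, card_univ,
    smul_eq_mul, mul_one, Composition.sum_card_antitonePrefixes]
  simp only [composition_card, mul_comm (Fintype.card _)]
  have h := add_sum_Icc_one_eq_sum_range_add (fun i => 2 ^ (b - i - 1) * Fintype.card i.Partition) b
  simp only [Nat.sub_zero, Nat.sub_self, Nat.zero_sub, pow_zero, one_mul, mul_one,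
    Fintype.card_unique] at h
  rw [h, add_comm]
end

section
/- Let t_b satisfy t_b = p(b) + ∑_{i=0}^{b-1} 2^{b-i-1}·p(i). Then t_b = ∑_{q ∈ P(b)} 2^{o(q)}, where P(b) is the set of unordered partitions of b and o(q) is the number of parts equal to 1 in q. -/
/-- Adding a part `1` to a partition of `n` gives a partition of `n+1`. -/
def addOnePart {n : ℕ} (q : Nat.Partition n) : Nat.Partition (n + 1) where
  parts := 1 ::ₘ q.parts
  parts_pos := by
    intro i hi
    rcases Multiset.mem_cons.mp hi with h | h
    · simp [h]
    · exact q.parts_pos h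
  parts_sum := by simp [q.parts_sum, Nat.add_comm]

/-- Partitions of `n` are equivalent to partitions of `n+1` having a part `1`. -/
def partitionOneEquiv (n : ℕ) :
    Nat.Partition n ≃ {q : Nat.Partition (n + 1) // 1 ∈ q.parts} where
  toFun q := ⟨addOnePart q, by simp [addOnePart]⟩
  invFun q :=
    { parts := q.1.parts.erase 1
      parts_pos := fun hi => q.1.parts_pos (Multiset.mem_of_mem_erase hi)
      parts_sum := by
        have h1 : (1 ::ₘ q.1.parts.erase 1).sum = n + 1 := by
          rw [Multiset.cons_erase q.2, q.1.parts_sum]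
        simp only [Multiset.sum_cons] at h1
        omega }
  left_inv q := by
    apply Nat.Partition.ext
    simp [addOnePart]
  right_inv q := by
    apply Subtype.ext
    apply Nat.Partition.ext
    exact Multiset.cons_erase q.2

set_option maxHeartbeats 1000000 in
/-- If `t b = p(b) + ∑_{i<b} 2^(b-i-1) p(i)`, then `t b` equals the sum over
unordered partitions `q` of `b` of `2^(number of parts of q equal to 1)`. -/
theorem trace_eq_sum_over_partitions (t : ℕ → ℕ)
    (h : ∀ b, t b = Fintype.card (Nat.Partition b) +
      ∑ i ∈ Finset.range b, 2 ^ (b - i - 1) * Fintype.card (Nat.Partition i)) :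
    ∀ b, t b = ∑ q : Nat.Partition b, 2 ^ (Multiset.count 1 q.parts) := by
  intro b
  rw [h b]
  clear h t
  induction b with
  | zero =>
    simp
  | succ n ih =>
    -- Split the sum over partitions of (n+1) by whether 1 is a part.
    have hsplit :
        (∑ q : Nat.Partition (n + 1), 2 ^ (Multiset.count 1 q.parts)) =
        (∑ q ∈ Finset.univ.filter (fun q : Nat.Partition (n + 1) => 1 ∈ q.parts),
            2 ^ (Multiset.count 1 q.parts)) +
        (∑ q ∈ Finset.univ.filter (fun q : Nat.Partition (n + 1) => ¬ 1 ∈ q.parts),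
            2 ^ (Multiset.count 1 q.parts)) :=
      (Finset.sum_filter_add_sum_filter_not _ _ _).symm
    -- The sum over partitions with a part 1 equals twice the sum over partitions of n.
    have h1 :
        (∑ q ∈ Finset.univ.filter (fun q : Nat.Partition (n + 1) => 1 ∈ q.parts),
            2 ^ (Multiset.count 1 q.parts)) =
        2 * ∑ q : Nat.Partition n, 2 ^ (Multiset.count 1 q.parts) := by
      rw [Finset.sum_subtype (Finset.univ.filter
            (fun q : Nat.Partition (n + 1) => 1 ∈ q.parts))
            (p := fun q : Nat.Partition (n+1) => 1 ∈ q.parts) (by simp)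
            (fun q => 2 ^ (Multiset.count 1 q.parts))]
      rw [← Equiv.sum_comp (partitionOneEquiv n)
            (fun q : {q : Nat.Partition (n+1) // 1 ∈ q.parts} =>
              2 ^ (Multiset.count 1 q.1.parts))]
      rw [Finset.mul_sum]
      apply Finset.sum_congr rfl
      intro q _
      simp [partitionOneEquiv, addOnePart, pow_succ, Nat.mul_comm]
    -- The sum over partitions without a part 1 is the number of such partitions.
    have h2 :
        (∑ q ∈ Finset.univ.filter (fun q : Nat.Partition (n + 1) => ¬ 1 ∈ q.parts),
            2 ^ (Multiset.count 1 q.parts)) =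
        (Finset.univ.filter (fun q : Nat.Partition (n + 1) => ¬ 1 ∈ q.parts)).card := by
      rw [Finset.card_eq_sum_ones]
      apply Finset.sum_congr rfl
      intro q hq
      simp only [Finset.mem_filter] at hq
      rw [Multiset.count_eq_zero_of_notMem hq.2, pow_zero]
    -- Card computations
    have hcard1 :
        (Finset.univ.filter (fun q : Nat.Partition (n + 1) => 1 ∈ q.parts)).card =
        Fintype.card (Nat.Partition n) := by
      rw [← Fintype.card_subtype]
      exact (Fintype.card_congr (partitionOneEquiv n)).symm
    have hcardsplit :
        (Finset.univ.filter (fun q : Nat.Partition (n + 1) => 1 ∈ q.parts)).card +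
        (Finset.univ.filter (fun q : Nat.Partition (n + 1) => ¬ 1 ∈ q.parts)).card =
        Fintype.card (Nat.Partition (n + 1)) := by
      rw [← Finset.card_univ]
      exact Finset.card_filter_add_card_filter_not _
    -- RHS algebra: split off i = n and factor 2 out.
    have hr : (∑ i ∈ Finset.range (n + 1),
          2 ^ (n + 1 - i - 1) * Fintype.card (Nat.Partition i)) =
        2 * (∑ i ∈ Finset.range n, 2 ^ (n - i - 1) * Fintype.card (Nat.Partition i)) +
        Fintype.card (Nat.Partition n) := by
      rw [Finset.sum_range_succ, Finset.mul_sum]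
      congr 1
      · apply Finset.sum_congr rfl
        intro i hi
        have hi' : i < n := Finset.mem_range.mp hi
        have : n + 1 - i - 1 = (n - i - 1) + 1 := by omega
        rw [this, pow_succ]
        ring
      · simp
    rw [hsplit, h1, h2, hr]
    omega
end

section
/- Suppose sequences T_b and s_b (b ≥ 0) satisfy T_b = s_b + ∑_{i=0}^{b-1} r_{b-i}·s_i, where r_m = r_{m,κ} is the number of compositions of m with parts at most κ (and r_0 = 1). Then s_b = T_b - ∑_{i=max(0,b-κ)}^{b-1} T_i. -/
/-! Splitting off the first part of a composition gives the recurrence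
`r m = ∑_{t ∈ [m - κ, m)} r t` for `m > 0`, and with `r 0 = 1` the hypothesis says that `T` is
the convolution `r * s`. Summing `T` over the window `[b - κ, b)` and exchanging the sums, the
coefficient of `s j` is `∑_{i ∈ [max j (b - κ), b)} r (i - j)`, which the recurrence collapses to
`r (b - j)`; so the window sum is `T b - s b`. -/

/-- `boundedComp m κ` is the number of compositions of `m` with all parts at
most `κ` (with `boundedComp 0 κ = 1`). -/
def boundedComp (m κ : ℕ) : ℕ :=
  Fintype.card {c : Composition m // ∀ x ∈ c.blocks, x ≤ κ}

open Finset

section Inversion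

variable {R : Type*} [CommRing R] {κ : ℕ} {r : ℕ → R}

lemma sum_Ico_max_sub_eq_of_recurrence (hr : ∀ m, 0 < m → r m = ∑ t ∈ Ico (m - κ) m, r t)
    {b j : ℕ} (hj : j < b) :
    ∑ i ∈ Ico (max j (b - κ)) b, r (i - j) = r (b - j) := by
  have hshift : ∑ t ∈ Ico (b - j - κ) (b - j), r t =
      ∑ t ∈ Ico (b - j - κ) (b - j), r (t + j - j) := by simp
  rw [hr (b - j) (by omega), hshift, sum_Ico_add' (fun i ↦ r (i - j))]
  congr 2 <;> omega

lemma sum_Ico_sum_range_mul_eq_of_recurrence (hr : ∀ m, 0 < m → r m = ∑ t ∈ Ico (m - κ) m, r t)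
    (s : ℕ → R) (b : ℕ) :
    ∑ i ∈ Ico (b - κ) b, ∑ j ∈ range (i + 1), r (i - j) * s j =
      ∑ j ∈ range b, r (b - j) * s j := by
  calc ∑ i ∈ Ico (b - κ) b, ∑ j ∈ range (i + 1), r (i - j) * s j
      = ∑ j ∈ range b, ∑ i ∈ Ico (max j (b - κ)) b, r (i - j) * s j := by
        refine sum_comm' fun i j ↦ ?_
        simp only [mem_Ico, mem_range]
        omega
    _ = ∑ j ∈ range b, r (b - j) * s j := by
        refine sum_congr rfl fun j hj ↦ ?_
        rw [← sum_mul, sum_Ico_max_sub_eq_of_recurrence hr (mem_range.mp hj)]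

theorem eq_sub_sum_Ico_of_eq_convolution (hr₀ : r 0 = 1)
    (hr : ∀ m, 0 < m → r m = ∑ t ∈ Ico (m - κ) m, r t) {T s : ℕ → R}
    (hT : ∀ b, T b = ∑ i ∈ range (b + 1), r (b - i) * s i) (b : ℕ) :
    s b = T b - ∑ i ∈ Ico (b - κ) b, T i := by
  rw [sum_congr rfl fun i _ ↦ hT i, sum_Ico_sum_range_mul_eq_of_recurrence hr, hT b, sum_range_succ,
    Nat.sub_self, hr₀]
  ring

end Inversion

section BoundedCompositions

variable (κ : ℕ)

abbrev BoundedPartList (m : ℕ) := {l : List ℕ // (∀ x ∈ l, 0 < x ∧ x ≤ κ) ∧ l.sum = m}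

def boundedCompositionEquiv (m : ℕ) :
    {c : Composition m // ∀ x ∈ c.blocks, x ≤ κ} ≃ BoundedPartList κ m where
  toFun c := ⟨c.1.blocks, fun _ hx ↦ ⟨c.1.blocks_pos hx, c.2 _ hx⟩, c.1.blocks_sum⟩
  invFun l := ⟨⟨l.1, fun hx ↦ (l.2.1 _ hx).1, l.2.2⟩, fun x hx ↦ (l.2.1 x hx).2⟩
  left_inv _ := rfl
  right_inv _ := rfl

lemma BoundedPartList.eq_cons_tail {m : ℕ} (hm : 0 < m) (l : BoundedPartList κ m) :
    l.1 = (m - l.1.tail.sum) :: l.1.tail ∧ l.1.tail.sum ∈ Ico (m - κ) m := by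
  obtain ⟨_ | ⟨a, l⟩, hparts, hsum⟩ := l
  · rw [List.sum_nil] at hsum
    omega
  · have ha := hparts a List.mem_cons_self
    simp only [List.sum_cons] at hsum
    simp only [List.tail_cons, List.cons.injEq, mem_Ico, and_true]
    omega

def boundedPartListConsEquiv {m : ℕ} (hm : 0 < m) :
    (Σ t : Ico (m - κ) m, BoundedPartList κ t) ≃ BoundedPartList κ m where
  toFun := fun ⟨⟨t, ht⟩, l, hl⟩ ↦ ⟨(m - t) :: l, by
    rw [mem_Ico] at ht
    refine ⟨fun x hx ↦ ?_, ?_⟩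
    · rcases List.mem_cons.mp hx with rfl | hx
      · omega
      · exact hl.1 x hx
    · simp only [List.sum_cons, hl.2]
      omega⟩
  invFun l := ⟨⟨l.1.tail.sum, (l.eq_cons_tail κ hm).2⟩,
    ⟨l.1.tail, fun x hx ↦ l.2.1 x (List.mem_of_mem_tail hx), rfl⟩⟩
  left_inv := by
    rintro ⟨⟨t, ht⟩, l, hl⟩
    obtain rfl : l.sum = t := hl.2
    rfl
  right_inv l := Subtype.ext (l.eq_cons_tail κ hm).1.symm

lemma boundedComp_zero : boundedComp 0 κ = 1 :=
  Fintype.card_eq_one_iff.mpr ⟨⟨Composition.ones 0, by simp⟩,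
    fun c ↦ Subtype.ext (Composition.ext (by simp [Composition.blocks_eq_nil]))⟩

lemma boundedComp_eq_sum_Ico {m : ℕ} (hm : 0 < m) :
    boundedComp m κ = ∑ t ∈ Ico (m - κ) m, boundedComp t κ := by
  let e := (boundedCompositionEquiv κ m).trans ((boundedPartListConsEquiv κ hm).symm.trans
    (Equiv.sigmaCongrRight fun t ↦ (boundedCompositionEquiv κ t).symm))
  rw [boundedComp, Fintype.card_congr e, Fintype.card_sigma,
    ← sum_attach (Ico (m - κ) m) (boundedComp · κ)]
  rfl

end BoundedCompositions

theorem capacity_inversion_general (κ : ℕ) (T s : ℕ → ℤ)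
    (h : ∀ b, T b = s b + ∑ i ∈ Finset.range b, (boundedComp (b - i) κ : ℤ) * s i) :
    ∀ b, s b = T b - ∑ i ∈ Finset.Ico (b - κ) b, T i := by
  refine eq_sub_sum_Ico_of_eq_convolution (r := fun m ↦ (boundedComp m κ : ℤ))
    (by exact_mod_cast boundedComp_zero κ)
    (fun m hm ↦ by exact_mod_cast boundedComp_eq_sum_Ico κ hm) fun b ↦ ?_
  rw [h b, sum_range_succ, Nat.sub_self, boundedComp_zero]
  ring

theorem capacity_inversion (κ : ℕ) (hκ : 1 ≤ κ) (T s : ℕ → ℤ)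
    (h : ∀ b, T b = s b + ∑ i ∈ Finset.range b, (boundedComp (b - i) κ : ℤ) * s i) :
    ∀ b, s b = T b - ∑ i ∈ Finset.Ico (b - κ) b, T i :=
  capacity_inversion_general κ T s h
end
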